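/- Let ν : F → G : C → D be a multinatural transformation of multifunctors between closed multicategories. Then F̲_{X₁,…,Xₘ;Y} · D̲(FX₁,…,FXₘ; ν_Y) = ν_{C̲(X₁,…,Xₘ;Y)} · G̲_{X₁,…,Xₘ;Y} · D̲(ν_{X₁},…,ν_{Xₘ}; GY) as morphisms F C̲(X₁,…,Xₘ;Y) → D̲(FX₁,…,FXₘ;GY). -/

import Mathlib

/-!
A morphism into an internal hom `D̲(As;Z)` is determined by its uncurrying `(1,…,1,−)·ev`.
Uncurrying the left-hand side gives `F(ev)·ν_Y`, uncurrying the right-hand side gives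
`(ν_{X₁},…,ν_{Xₘ},ν_{C̲(Xs;Y)})·G(ev)`, and these agree by multinaturality of `ν` at
`ev : Xs, C̲(Xs;Y) → Y`. Each uncurrying step is an instance of associativity for
composites of the shape `(f₁,…,fₘ,b)·g` with `f₁,…,fₘ` unary.
-/

universe u v

/-- A family of multimorphisms `f_i : Xss_i → Ys_i` (with matching lengths),
used to express simultaneous composition in a multicategory. -/
inductive HomFam (Obj : Type u) (Hom : List Obj → Obj → Type v) :
    List (List Obj) → List Obj → Type (max u v)
  | nil : HomFam Obj Hom [] []
  | cons {Xs Y Xss Ys} : Hom Xs Y → HomFam Obj Hom Xss Ys →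
      HomFam Obj Hom (Xs :: Xss) (Y :: Ys)

/-- A family of families of multimorphisms. -/
inductive FamFam (Obj : Type u) (Hom : List Obj → Obj → Type v) :
    List (List (List Obj)) → List (List Obj) → Type (max u v)
  | nil : FamFam Obj Hom [] []
  | cons {Xss Ys Xsss Yss} : HomFam Obj Hom Xss Ys → FamFam Obj Hom Xsss Yss →
      FamFam Obj Hom (Xss :: Xsss) (Ys :: Yss)

variable {Obj : Type u} {Hom : List Obj → Obj → Type v}

/-- The family of identities on a list of objects. -/
def idFam (ident : ∀ X, Hom [X] X) : ∀ Ys : List Obj,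
    HomFam Obj Hom (Ys.map fun y => [y]) Ys
  | [] => .nil
  | y :: ys => .cons (ident y) (idFam ident ys)

/-- Concatenation of families. -/
def appendFam : ∀ {A B C D}, HomFam Obj Hom A B → HomFam Obj Hom C D →
    HomFam Obj Hom (A ++ C) (B ++ D)
  | _, _, _, _, .nil, t => t
  | _, _, _, _, .cons f fs, t => .cons f (appendFam fs t)

/-- Flattening a family of families. -/
def flattenFam : ∀ {Xsss Yss}, FamFam Obj Hom Xsss Yss →
    HomFam Obj Hom Xsss.flatten Yss.flatten
  | _, _, .nil => .nil
  | _, _, .cons fs fss => appendFam fs (flattenFam fss)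

/-- Componentwise composition of a family of families with a family. -/
def zipComp
    (comp : ∀ {Xss Ys Z}, HomFam Obj Hom Xss Ys → Hom Ys Z → Hom Xss.flatten Z) :
    ∀ {Xsss Yss Zs}, FamFam Obj Hom Xsss Yss → HomFam Obj Hom Yss Zs →
      HomFam Obj Hom (Xsss.map List.flatten) Zs
  | _, _, _, .nil, .nil => .nil
  | _, _, _, .cons fs fss, .cons g gs => .cons (comp fs g) (zipComp comp fss gs)

/-- A multicategory: objects, multimorphisms `X₁,…,Xₙ → Y`, identities and an
associative and unital simultaneous composition `(f₁,…,fₙ) · g`. -/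
structure Multicategory : Type (max (u + 1) (v + 1)) where
  Obj : Type u
  Hom : List Obj → Obj → Type v
  ident : ∀ X : Obj, Hom [X] X
  comp : ∀ {Xss : List (List Obj)} {Ys : List Obj} {Z : Obj},
    HomFam Obj Hom Xss Ys → Hom Ys Z → Hom Xss.flatten Z
  id_comp : ∀ {Ys Z} (g : Hom Ys Z), HEq (comp (idFam ident Ys) g) g
  comp_id : ∀ {Xs Y} (f : Hom Xs Y), HEq (comp (.cons f .nil) (ident Y)) f
  assoc : ∀ {Xsss Yss Zs Z} (fss : FamFam Obj Hom Xsss Yss)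
    (gs : HomFam Obj Hom Yss Zs) (h : Hom Zs Z),
    HEq (comp (zipComp (fun fs g => comp fs g) fss gs) h)
        (comp (flattenFam fss) (comp gs h))

namespace Multicategory

variable (M : Multicategory.{u, v})

theorem map_singleton_flatten (l : List M.Obj) :
    (l.map fun x => [x]).flatten = l := by
  induction l <;> simp_all

theorem sflat (Xs Ys : List M.Obj) :
    ((Xs.map fun x => [x]) ++ [Ys]).flatten = Xs ++ Ys := by
  induction Xs <;> simp_all

theorem sflat2 (Xs Γ : List M.Obj) :
    (Xs :: (Γ.map fun x => [x])).flatten = Xs ++ Γ := by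
  simp [List.flatten_cons, map_singleton_flatten]

/-- `(1,…,1,f) · g` : plugging `f` into the last argument of `g`. -/
def plug {Xs Ys : List M.Obj} {H Z : M.Obj} (f : M.Hom Ys H)
    (g : M.Hom (Xs ++ [H]) Z) : M.Hom (Xs ++ Ys) Z :=
  cast (congrArg (M.Hom · Z) (M.sflat Xs Ys))
    (M.comp (appendFam (idFam M.ident Xs) (.cons f .nil)) g)

/-- `(f,1,…,1) · g` : plugging `f` into the first argument of `g`. -/
def plugFirst {Xs Γ : List M.Obj} {Y Z : M.Obj} (f : M.Hom Xs Y)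
    (g : M.Hom (Y :: Γ) Z) : M.Hom (Xs ++ Γ) Z :=
  cast (congrArg (M.Hom · Z) (M.sflat2 Xs Γ))
    (M.comp (.cons f (idFam M.ident Γ)) g)

/-- `(f) · h` : composing a multimorphism with a unary morphism. -/
def postcomp {Γ : List M.Obj} {Y Z : M.Obj} (f : M.Hom Γ Y) (h : M.Hom [Y] Z) :
    M.Hom Γ Z :=
  cast (congrArg (M.Hom · Z) (by simp : ([Γ].flatten : List M.Obj) = Γ))
    (M.comp (.cons f .nil) h)

/-- Composition in the underlying category. -/
def comp1 {X Y Z : M.Obj} (f : M.Hom [X] Y) (g : M.Hom [Y] Z) : M.Hom [X] Z :=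
  M.postcomp f g

/-- `(a, b) · g` : binary simultaneous composition. -/
def pair {As Bs : List M.Obj} {A' B' Cc : M.Obj} (a : M.Hom As A') (b : M.Hom Bs B')
    (g : M.Hom [A', B'] Cc) : M.Hom (As ++ Bs) Cc :=
  cast (congrArg (M.Hom · Cc) (by simp : ([As, Bs].flatten : List M.Obj) = As ++ Bs))
    (M.comp (.cons a (.cons b .nil)) g)

/-- `(f₁,…,fₘ,1) · g` for a family of unary morphisms `fᵢ`. -/
def sideComp {As Bs : List M.Obj} (fs : HomFam M.Obj M.Hom (As.map fun a => [a]) Bs)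
    {H Z : M.Obj} (g : M.Hom (Bs ++ [H]) Z) : M.Hom (As ++ [H]) Z :=
  cast (congrArg (M.Hom · Z) (M.sflat As [H]))
    (M.comp (appendFam fs (.cons (M.ident H) .nil)) g)

end Multicategory

/-- The image of a family of multimorphisms under a multifunctor. -/
def mapFam {M N : Multicategory.{u, v}} (obj : M.Obj → N.Obj)
    (map : ∀ {Xs Y}, M.Hom Xs Y → N.Hom (Xs.map obj) (obj Y)) :
    ∀ {Xss Ys}, HomFam M.Obj M.Hom Xss Ys →
      HomFam N.Obj N.Hom (Xss.map (List.map obj)) (Ys.map obj)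
  | _, _, .nil => .nil
  | _, _, .cons f fs => .cons (map f) (mapFam obj @map fs)

/-- A multifunctor between multicategories. -/
structure Multifunctor (M N : Multicategory.{u, v}) : Type (max u v) where
  obj : M.Obj → N.Obj
  map : ∀ {Xs Y}, M.Hom Xs Y → N.Hom (Xs.map obj) (obj Y)
  map_ident : ∀ X, map (M.ident X) = N.ident (obj X)
  map_comp : ∀ {Xss Ys Z} (fs : HomFam M.Obj M.Hom Xss Ys) (g : M.Hom Ys Z),
    HEq (map (M.comp fs g)) (N.comp (mapFam obj @map fs) (map g))

/-- A closed multicategory : a multicategory together with internal hom objects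
and evaluation morphisms such that `φ : f ↦ (1,…,1,f)·ev` is a bijection. -/
structure ClosedMulticategory extends Multicategory.{u, v} where
  ihom : List Obj → Obj → Obj
  ev : ∀ (Xs : List Obj) (Z : Obj), Hom (Xs ++ [ihom Xs Z]) Z
  closed : ∀ (Xs Ys : List Obj) (Z : Obj),
    Function.Bijective
      (fun f : Hom Ys (ihom Xs Z) => toMulticategory.plug f (ev Xs Z))

namespace ClosedMulticategory

variable (C : ClosedMulticategory.{u, v})

/-- The inverse of the bijection `φ` : currying. -/
noncomputable def curry {Xs Ys : List C.Obj} {Z : C.Obj}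
    (f : C.Hom (Xs ++ Ys) Z) : C.Hom Ys (C.ihom Xs Z) :=
  (Equiv.ofBijective _ (C.closed Xs Ys Z)).symm f

/-- The covariant action `C̲(W₁,…,Wₘ; h)` of a unary morphism `h` on internal
homs, defined by `(1,…,1,C̲(Ws;h)) · ev_{Ws;B} = ev_{Ws;A} · h`. -/
noncomputable def homCovM (Ws : List C.Obj) {A B : C.Obj} (h : C.Hom [A] B) :
    C.Hom [C.ihom Ws A] (C.ihom Ws B) :=
  C.curry (Xs := Ws) (C.toMulticategory.postcomp (C.ev Ws A) h)

/-- The contravariant action `C̲(h; Z)` of a unary morphism `h : A → B` on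
internal homs, defined by `(1,C̲(h;Z)) · ev_{A;Z} = (h,1) · ev_{B;Z}`. -/
noncomputable def homContra {A B : C.Obj} (h : C.Hom [A] B) (Z : C.Obj) :
    C.Hom [C.ihom [B] Z] (C.ihom [A] Z) :=
  C.curry (Xs := [A]) (C.toMulticategory.plugFirst h (C.ev [B] Z))

/-- The contravariant action `C̲(f₁,…,fₘ; Z)` of a family of unary morphisms on
internal homs. -/
noncomputable def homContraM {As Bs : List C.Obj}
    (fs : HomFam C.Obj C.Hom (As.map fun a => [a]) Bs) (Z : C.Obj) :
    C.Hom [C.ihom Bs Z] (C.ihom As Z) :=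
  C.curry (Xs := As) (C.toMulticategory.sideComp fs (C.ev Bs Z))

/-- Composition `μ` of the `C`-category `C̲`, determined by
`(1_X, μ)·ev_{X;Z} = (ev_{X;Y},1)·ev_{Y;Z}`. -/
noncomputable def mu (X Y Z : C.Obj) :
    C.Hom [C.ihom [X] Y, C.ihom [Y] Z] (C.ihom [X] Z) :=
  C.curry (Xs := [X])
    (C.toMulticategory.plugFirst (Xs := [X, C.ihom [X] Y]) (Γ := [C.ihom [Y] Z])
      (C.ev [X] Y) (C.ev [Y] Z))

/-- The identity `⟨1_X⟩ : () → C̲(X;X)` of the `C`-category `C̲`. -/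
noncomputable def oneHom (X : C.Obj) : C.Hom [] (C.ihom [X] X) :=
  C.curry (Xs := [X]) (Ys := []) (C.ident X)

/-- The morphism `L^X_{YZ} : C̲(Y;Z) → C̲(C̲(X;Y);C̲(X;Z))`, uniquely determined
by `(1, L^X_{YZ}) · ev = μ`. -/
noncomputable def Lhat (X Y Z : C.Obj) :
    C.Hom [C.ihom [Y] Z] (C.ihom [C.ihom [X] Y] (C.ihom [X] Z)) :=
  C.curry (Xs := [C.ihom [X] Y]) (C.mu X Y Z)

/-- The action `C̲(u;1) : C̲(1;X) → C̲(;X) = X` of a nullary morphism `u`. -/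
def uAct {one : C.Obj} (u : C.Hom [] one) (X : C.Obj) :
    C.Hom [C.ihom [one] X] X :=
  C.toMulticategory.plugFirst u (C.ev [one] X)

/-- `(one, u)` is a unit object of the closed multicategory `C` if all the
morphisms `C̲(u;1) : C̲(1;X) → X` are invertible. -/
def IsUnitObj (one : C.Obj) (u : C.Hom [] one) : Prop :=
  ∀ X : C.Obj, ∃ inv : C.Hom [X] (C.ihom [one] X),
    C.toMulticategory.comp1 (C.uAct u X) inv = C.ident (C.ihom [one] X) ∧
    C.toMulticategory.comp1 inv (C.uAct u X) = C.ident X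

end ClosedMulticategory

/-- The closing transformation `F̲_{Xs;Z} : F C̲(Xs;Z) → D̲(F Xs; FZ)` of a
multifunctor between closed multicategories, i.e. the unique morphism with
`(1,…,1,F̲) · ev^D = F(ev^C)`. -/
noncomputable def closingTrans {C D : ClosedMulticategory.{u, v}}
    (F : Multifunctor C.toMulticategory D.toMulticategory)
    (Xs : List C.Obj) (Z : C.Obj) :
    D.Hom [F.obj (C.ihom Xs Z)] (D.ihom (Xs.map F.obj) (F.obj Z)) :=
  D.curry (Xs := Xs.map F.obj)
    (cast (congrArg (D.Hom · (F.obj Z)) (List.map_append :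
      (Xs ++ [C.ihom Xs Z]).map F.obj = Xs.map F.obj ++ [C.ihom Xs Z].map F.obj))
      (F.map (C.ev Xs Z)))

/-- The family of components `ν_{X₁},…,ν_{Xₙ}` of a transformation along a list
of objects. -/
def appFam {M N : Multicategory.{u, v}} (Fo Go : M.Obj → N.Obj)
    (app : ∀ X : M.Obj, N.Hom [Fo X] (Go X)) :
    ∀ Xs : List M.Obj,
      HomFam N.Obj N.Hom ((Xs.map Fo).map fun a => [a]) (Xs.map Go)
  | [] => .nil
  | x :: xs => .cons (app x) (appFam Fo Go app xs)

/-- A multinatural transformation `ν : F → G` of multifunctors: components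
`ν_X : FX → GX` with `F(f)·ν_Y = (ν_{X₁},…,ν_{Xₙ})·G(f)`. -/
structure Multinat {M N : Multicategory.{u, v}} (F G : Multifunctor M N) :
    Type (max u v) where
  app : ∀ X : M.Obj, N.Hom [F.obj X] (G.obj X)
  natural : ∀ {Xs Y} (f : M.Hom Xs Y),
    N.postcomp (F.map f) (app Y)
      = cast (congrArg (N.Hom · (G.obj Y)) (N.map_singleton_flatten (Xs.map F.obj)))
          (N.comp (appFam F.obj G.obj app Xs) (G.map f))

@[simp]
theorem List.flatten_map_singleton {α β : Type*} (f : α → β) (l : List α) :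
    (l.map fun x => [f x]).flatten = l.map f := by
  induction l <;> simp_all

theorem HomFam.cons_heq_cons {Xs Xs' : List Obj} {Y Y' : Obj}
    {Xss Xss' : List (List Obj)} {Ys Ys' : List Obj}
    (hXs : Xs = Xs') (hY : Y = Y') (hXss : Xss = Xss') (hYs : Ys = Ys')
    {f : Hom Xs Y} {f' : Hom Xs' Y'} (hf : HEq f f')
    {fs : HomFam Obj Hom Xss Ys} {fs' : HomFam Obj Hom Xss' Ys'} (hfs : HEq fs fs') :
    HEq (HomFam.cons f fs) (HomFam.cons f' fs') := by
  subst hXs hY hXss hYs hf hfs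
  rfl

theorem appendFam_nil : ∀ {A B} (fs : HomFam Obj Hom A B), HEq (appendFam fs .nil) fs
  | _, _, .nil => .rfl
  | _, _, .cons _ fs =>
    HomFam.cons_heq_cons rfl rfl (by simp) (by simp) .rfl (appendFam_nil fs)

/-- The family of families `((f₁),…,(fₘ),(a))` built from unary `f₁,…,fₘ` and `a`. -/
def wrapSnocFam {Es : List Obj} {H : Obj} (a : Hom Es H) :
    ∀ {As Bs : List Obj}, HomFam Obj Hom (As.map fun x => [x]) Bs →
      FamFam Obj Hom ((As.map fun x => [[x]]) ++ [[Es]]) ((Bs.map fun y => [y]) ++ [[H]])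
  | [], [], .nil => .cons (.cons a .nil) .nil
  | _ :: _, _ :: _, .cons f fs => .cons (.cons f .nil) (wrapSnocFam a fs)

theorem flattenFam_wrapSnocFam {Es : List Obj} {H : Obj} (a : Hom Es H) :
    ∀ {As Bs : List Obj} (fs : HomFam Obj Hom (As.map fun x => [x]) Bs),
      HEq (flattenFam (wrapSnocFam a fs)) (appendFam fs (.cons a .nil))
  | [], [], .nil => .rfl
  | _ :: _, _ :: _, .cons _ fs =>
    HomFam.cons_heq_cons rfl rfl (by simp) (by simp) .rfl (flattenFam_wrapSnocFam a fs)

namespace Multicategory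

variable (M : Multicategory.{u, v})

theorem comp_congr {Xss Xss' : List (List M.Obj)} {Ys Ys' : List M.Obj} {Z : M.Obj}
    (hXss : Xss = Xss') (hYs : Ys = Ys')
    {fs : HomFam M.Obj M.Hom Xss Ys} {fs' : HomFam M.Obj M.Hom Xss' Ys'}
    (hfs : HEq fs fs') {g : M.Hom Ys Z} {g' : M.Hom Ys' Z} (hg : HEq g g') :
    HEq (M.comp fs g) (M.comp fs' g') := by
  subst hXss hYs hfs hg
  rfl

/-- `(f₁,…,fₘ,b) · g` for unary `f₁,…,fₘ`. -/
def compSnoc {As Bs Es : List M.Obj} {H Z : M.Obj}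
    (fs : HomFam M.Obj M.Hom (As.map fun x => [x]) Bs) (b : M.Hom Es H)
    (g : M.Hom (Bs ++ [H]) Z) : M.Hom (As ++ Es) Z :=
  cast (congrArg (M.Hom · Z) (M.sflat As Es))
    (M.comp (appendFam fs (.cons b .nil)) g)

theorem sideComp_eq_compSnoc {As Bs : List M.Obj}
    (fs : HomFam M.Obj M.Hom (As.map fun x => [x]) Bs) {H Z : M.Obj}
    (g : M.Hom (Bs ++ [H]) Z) : M.sideComp fs g = M.compSnoc fs (M.ident H) g :=
  rfl

theorem postcomp_ident {Xs : List M.Obj} {Y : M.Obj} (f : M.Hom Xs Y) :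
    M.postcomp f (M.ident Y) = f :=
  eq_of_heq ((cast_heq _ _).trans (M.comp_id f))

theorem postcomp_cast {L L' : List M.Obj} {W Z : M.Obj} (e : L = L') (f : M.Hom L W)
    (h : M.Hom [W] Z) :
    M.postcomp (cast (congrArg (M.Hom · W) e) f) h
      = cast (congrArg (M.Hom · Z) e) (M.postcomp f h) := by
  subst e
  rfl

theorem zipComp_wrapSnocFam_idFam_appendFam {Es : List M.Obj} {H₁ H₂ : M.Obj}
    (a : M.Hom Es H₁) (b : M.Hom [H₁] H₂) :
    ∀ {As Bs : List M.Obj} (fs : HomFam M.Obj M.Hom (As.map fun x => [x]) Bs),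
      HEq (zipComp (fun fs g => M.comp fs g) (wrapSnocFam a (idFam M.ident As))
            (appendFam fs (.cons b .nil)))
        (appendFam fs (.cons (M.postcomp a b) .nil))
  | [], [], .nil => HomFam.cons_heq_cons (by simp) rfl rfl rfl (cast_heq _ _).symm .rfl
  | _ :: _, _ :: _, .cons f fs =>
    HomFam.cons_heq_cons (by simp) rfl (by simp) rfl (M.id_comp f)
      (zipComp_wrapSnocFam_idFam_appendFam a b fs)

theorem zipComp_wrapSnocFam_appendFam_idFam {Es : List M.Obj} {H₁ H₂ : M.Obj}
    (a : M.Hom Es H₁) (b : M.Hom [H₁] H₂) :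
    ∀ {As Bs : List M.Obj} (fs : HomFam M.Obj M.Hom (As.map fun x => [x]) Bs),
      HEq (zipComp (fun fs g => M.comp fs g) (wrapSnocFam a fs)
            (appendFam (idFam M.ident Bs) (.cons b .nil)))
        (appendFam fs (.cons (M.postcomp a b) .nil))
  | [], [], .nil => HomFam.cons_heq_cons (by simp) rfl rfl rfl (cast_heq _ _).symm .rfl
  | _ :: _, _ :: _, .cons f fs =>
    HomFam.cons_heq_cons (by simp) rfl (by simp) rfl (M.comp_id f)
      (zipComp_wrapSnocFam_appendFam_idFam a b fs)

theorem compSnoc_postcomp_eq_plug_compSnoc {As Bs Es : List M.Obj} {H₁ H₂ Z : M.Obj}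
    (fs : HomFam M.Obj M.Hom (As.map fun x => [x]) Bs)
    (a : M.Hom Es H₁) (b : M.Hom [H₁] H₂) (g : M.Hom (Bs ++ [H₂]) Z) :
    M.compSnoc fs (M.postcomp a b) g = M.plug a (M.compSnoc fs b g) := by
  have assoc := M.assoc (wrapSnocFam a (idFam M.ident As)) (appendFam fs (.cons b .nil)) g
  refine eq_of_heq (((cast_heq _ _).trans ?_).trans (cast_heq _ _).symm)
  refine ((M.comp_congr (by simp) rfl
    (M.zipComp_wrapSnocFam_idFam_appendFam a b fs).symm .rfl).trans assoc).trans ?_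
  exact M.comp_congr (by simp) (by simp) (flattenFam_wrapSnocFam a (idFam M.ident As))
    (cast_heq _ _).symm

theorem compSnoc_postcomp_eq_compSnoc_plug {As Bs Es : List M.Obj} {H₁ H₂ Z : M.Obj}
    (fs : HomFam M.Obj M.Hom (As.map fun x => [x]) Bs)
    (a : M.Hom Es H₁) (b : M.Hom [H₁] H₂) (g : M.Hom (Bs ++ [H₂]) Z) :
    M.compSnoc fs (M.postcomp a b) g = M.compSnoc fs a (M.plug b g) := by
  have assoc := M.assoc (wrapSnocFam a fs) (appendFam (idFam M.ident Bs) (.cons b .nil)) g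
  refine eq_of_heq (((cast_heq _ _).trans ?_).trans (cast_heq _ _).symm)
  refine ((M.comp_congr (by simp) rfl
    (M.zipComp_wrapSnocFam_appendFam_idFam a b fs).symm .rfl).trans assoc).trans ?_
  exact M.comp_congr (by simp) (by simp) (flattenFam_wrapSnocFam a fs) (cast_heq _ _).symm

theorem plug_postcomp_eq_plug_plug {Xs Es : List M.Obj} {H₁ H₂ Z : M.Obj}
    (a : M.Hom Es H₁) (b : M.Hom [H₁] H₂) (g : M.Hom (Xs ++ [H₂]) Z) :
    M.plug (M.postcomp a b) g = M.plug a (M.plug b g) :=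
  M.compSnoc_postcomp_eq_plug_compSnoc (idFam M.ident Xs) a b g

theorem plug_sideComp {As Bs Es : List M.Obj} {H Z : M.Obj}
    (fs : HomFam M.Obj M.Hom (As.map fun x => [x]) Bs) (a : M.Hom Es H)
    (g : M.Hom (Bs ++ [H]) Z) :
    M.plug a (M.sideComp fs g) = M.compSnoc fs a g := by
  rw [sideComp_eq_compSnoc, ← compSnoc_postcomp_eq_plug_compSnoc, postcomp_ident]

theorem plug_postcomp_eq_postcomp_plug {Xs Ys : List M.Obj} {H W Z : M.Obj}
    (f : M.Hom Ys H) (g : M.Hom (Xs ++ [H]) W) (h : M.Hom [W] Z) :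
    M.plug f (M.postcomp g h) = M.postcomp (M.plug f g) h := by
  have assoc :=
    M.assoc (.cons (appendFam (idFam M.ident Xs) (.cons f .nil)) .nil) (.cons g .nil) h
  have hl : HEq (M.comp (.cons (M.plug f g) .nil) h)
      (M.comp (zipComp (fun fs g => M.comp fs g)
        (.cons (appendFam (idFam M.ident Xs) (.cons f .nil)) .nil) (.cons g .nil)) h) :=
    M.comp_congr (by simp) rfl
      (HomFam.cons_heq_cons (M.sflat Xs Ys).symm rfl rfl rfl (cast_heq _ _) .rfl) .rfl
  have hr : HEq
      (M.comp (flattenFam (.cons (appendFam (idFam M.ident Xs) (.cons f .nil)) .nil))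
        (M.comp (.cons g .nil) h))
      (M.comp (appendFam (idFam M.ident Xs) (.cons f .nil)) (M.postcomp g h)) :=
    M.comp_congr (by simp) (by simp) (appendFam_nil _) (cast_heq _ _).symm
  exact eq_of_heq ((cast_heq _ _).trans
    (((hl.trans assoc).trans hr).symm.trans (cast_heq _ _).symm))

end Multicategory

namespace ClosedMulticategory

variable (C : ClosedMulticategory.{u, v})

theorem plug_curry {Xs Ys : List C.Obj} {Z : C.Obj} (f : C.Hom (Xs ++ Ys) Z) :
    C.plug (C.curry f) (C.ev Xs Z) = f :=
  (Equiv.ofBijective _ (C.closed Xs Ys Z)).apply_symm_apply f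

theorem plug_homCovM_ev (Ws : List C.Obj) {A B : C.Obj} (h : C.Hom [A] B) :
    C.plug (C.homCovM Ws h) (C.ev Ws B) = C.postcomp (C.ev Ws A) h :=
  C.plug_curry _

theorem plug_homContraM_ev {As Bs : List C.Obj}
    (fs : HomFam C.Obj C.Hom (As.map fun x => [x]) Bs) (Z : C.Obj) :
    C.plug (C.homContraM fs Z) (C.ev As Z) = C.sideComp fs (C.ev Bs Z) :=
  C.plug_curry _

end ClosedMulticategory

theorem plug_closingTrans_ev {C D : ClosedMulticategory.{u, v}}
    (F : Multifunctor C.toMulticategory D.toMulticategory) (Xs : List C.Obj) (Z : C.Obj) :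
    D.plug (closingTrans F Xs Z) (D.ev (Xs.map F.obj) (F.obj Z))
      = cast (congrArg (D.Hom · (F.obj Z)) List.map_append) (F.map (C.ev Xs Z)) :=
  D.plug_curry _

theorem appFam_append {M N : Multicategory.{u, v}} (Fo Go : M.Obj → N.Obj)
    (app : ∀ X : M.Obj, N.Hom [Fo X] (Go X)) (X : M.Obj) :
    ∀ Xs : List M.Obj, HEq (appFam Fo Go app (Xs ++ [X]))
      (appendFam (appFam Fo Go app Xs) (.cons (app X) .nil))
  | [] => .rfl
  | _ :: Xs =>
    HomFam.cons_heq_cons rfl rfl (by simp) (by simp) .rfl (appFam_append Fo Go app X Xs)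

theorem Multinat.natural_snoc {M N : Multicategory.{u, v}} {F G : Multifunctor M N}
    (ν : Multinat F G) {Xs : List M.Obj} {X Y : M.Obj} (f : M.Hom (Xs ++ [X]) Y) :
    N.postcomp (cast (congrArg (N.Hom · (F.obj Y)) List.map_append) (F.map f)) (ν.app Y)
      = N.compSnoc (appFam F.obj G.obj ν.app Xs) (ν.app X)
          (cast (congrArg (N.Hom · (G.obj Y)) List.map_append) (G.map f)) := by
  rw [N.postcomp_cast List.map_append, ν.natural]
  refine eq_of_heq (((cast_heq _ _).trans (cast_heq _ _)).trans
    (HEq.trans ?_ (cast_heq _ _).symm))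
  exact N.comp_congr (by simp) (by simp) (appFam_append F.obj G.obj ν.app X Xs)
    (cast_heq _ _).symm

/-- For a multinatural transformation `ν : F → G` of
multifunctors between closed multicategories,
`F̲_{Xs;Y} · D̲(F Xs; ν_Y) = ν_{C̲(Xs;Y)} · G̲_{Xs;Y} · D̲(ν_{X₁},…,ν_{Xₘ}; GY)`
as morphisms `F C̲(Xs;Y) → D̲(F Xs; GY)`. -/
theorem closing_multinat (C D : ClosedMulticategory.{u, v})
    (F G : Multifunctor C.toMulticategory D.toMulticategory)
    (ν : Multinat F G) (Xs : List C.Obj) (Y : C.Obj) :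
    D.toMulticategory.comp1 (closingTrans F Xs Y)
        (D.homCovM (Xs.map F.obj) (ν.app Y))
      = D.toMulticategory.comp1 (ν.app (C.ihom Xs Y))
          (D.toMulticategory.comp1 (closingTrans G Xs Y)
            (D.homContraM (As := Xs.map F.obj) (Bs := Xs.map G.obj)
              (appFam F.obj G.obj ν.app Xs) (G.obj Y))) := by
  refine (D.closed (Xs.map F.obj) [F.obj (C.ihom Xs Y)] (G.obj Y)).1 ?_
  change D.plug (D.postcomp _ _) _ = D.plug (D.postcomp _ (D.postcomp _ _)) _
  conv_lhs => rw [D.plug_postcomp_eq_plug_plug, D.plug_homCovM_ev,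
    D.plug_postcomp_eq_postcomp_plug, plug_closingTrans_ev, ν.natural_snoc]
  conv_rhs => rw [D.plug_postcomp_eq_plug_plug, D.plug_postcomp_eq_plug_plug,
    D.plug_homContraM_ev, D.plug_sideComp, ← D.compSnoc_postcomp_eq_plug_compSnoc,
    D.compSnoc_postcomp_eq_compSnoc_plug, plug_closingTrans_ev]
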